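/- arXiv:0909.2332 — 2 statements merged into one kernel-verified Lean document; each statement's English description precedes it below -/
import Mathlib

section
/- Let Z_1, …, Z_{n+1} be exchangeable real-valued random variables and let ε > 0. Then the probability that |{i ∈ {1, …, n+1} : Z_i ≤ Z_{n+1}}| ≤ ε(n+1) is at most ε. -/
open Finset MeasureTheory
open scoped ENNReal

/-- Rank (with ties counted `≤`) of coordinate `j` in the vector `v`. -/
noncomputable def rk {n : ℕ} (j : Fin (n + 1)) (v : Fin (n + 1) → ℝ) : ℕ :=
  (univ.filter fun i => v i ≤ v j).card

lemma rk_meas {n : ℕ} (j : Fin (n + 1)) : Measurable (rk (n := n) j) := by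
  unfold rk
  simp_rw [Finset.card_filter]
  exact Finset.measurable_sum _ fun i _ =>
    Measurable.ite (measurableSet_le (measurable_pi_apply i) (measurable_pi_apply j))
      measurable_const measurable_const

lemma rk_count {n : ℕ} (v : Fin (n + 1) → ℝ) (k : ℕ) :
    (univ.filter fun j => rk j v ≤ k).card ≤ k := by
  set S := univ.filter fun j => rk j v ≤ k with hS
  rcases S.eq_empty_or_nonempty with h | h
  · simp [h]
  · obtain ⟨j₀, hj₀, hmax⟩ := S.exists_max_image v h
    have hsub : S ⊆ univ.filter fun i => v i ≤ v j₀ := fun i hi => by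
      simp only [mem_filter, mem_univ, true_and]
      exact hmax i hi
    calc S.card ≤ rk j₀ v := Finset.card_le_card hsub
      _ ≤ k := (mem_filter.mp hj₀).2

/-- For exchangeable real random variables `Z 0, …, Z n`, the probability that the
last one lies in the bottom `ε`-fraction (ties counted with `≤`) is at most `ε`. -/
theorem exchangeable_bottom_fraction {Ω : Type*} [MeasurableSpace Ω]
    (μ : Measure Ω) [IsProbabilityMeasure μ] {n : ℕ} (Z : Fin (n + 1) → Ω → ℝ)
    (hmeas : ∀ i, Measurable (Z i))
    (hexch : ∀ σ : Equiv.Perm (Fin (n + 1)),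
      Measure.map (fun ω i => Z (σ i) ω) μ = Measure.map (fun ω i => Z i ω) μ)
    (ε : ℝ) (hε : 0 < ε) :
    μ {ω | ((univ.filter fun i : Fin (n + 1) => Z i ω ≤ Z (Fin.last n) ω).card : ℝ)
        ≤ ε * (n + 1)} ≤ ENNReal.ofReal ε := by
  have hc0 : (0:ℝ) ≤ ε * (n + 1) := by positivity
  set k : ℕ := ⌊ε * (n + 1)⌋₊ with hk
  set A : Fin (n + 1) → Set Ω :=
    fun j => (fun ω i => Z i ω) ⁻¹' {v | rk j v ≤ k} with hA
  have hZvec : Measurable fun ω i => Z i ω := measurable_pi_lambda _ hmeas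
  have hMs : ∀ j : Fin (n + 1), MeasurableSet {v : Fin (n + 1) → ℝ | rk j v ≤ k} :=
    fun j => rk_meas j measurableSet_Iic
  have hAms : ∀ j, MeasurableSet (A j) := fun j => hZvec (hMs j)
  -- the event equals A (Fin.last n)
  have hev : {ω | ((univ.filter fun i : Fin (n + 1) => Z i ω ≤ Z (Fin.last n) ω).card : ℝ)
      ≤ ε * (n + 1)} = A (Fin.last n) := by
    ext ω
    simp only [hA, Set.mem_setOf_eq, Set.mem_preimage, rk]
    rw [← Nat.le_floor_iff hc0]
  -- all A j have the same measure
  have key : ∀ j : Fin (n + 1), μ (A j) = μ (A (Fin.last n)) := by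
    intro j
    set σ : Equiv.Perm (Fin (n + 1)) := Equiv.swap j (Fin.last n) with hσ
    have hσZ : Measurable fun ω i => Z (σ i) ω := measurable_pi_lambda _ fun i => hmeas _
    have h1 : (fun ω i => Z (σ i) ω) ⁻¹' {v | rk (Fin.last n) v ≤ k} = A j := by
      ext ω
      simp only [hA, Set.mem_preimage, Set.mem_setOf_eq]
      have hcard : rk (Fin.last n) (fun i => Z (σ i) ω) = rk j (fun i => Z i ω) := by
        unfold rk
        have hlast : Z (σ (Fin.last n)) ω = Z j ω := by
          rw [hσ, Equiv.swap_apply_right]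
        show (univ.filter fun i => Z (σ i) ω ≤ Z (σ (Fin.last n)) ω).card
          = (univ.filter fun i => Z i ω ≤ Z j ω).card
        rw [hlast]
        apply Finset.card_bij (fun i _ => σ i)
        · intro a ha
          simp only [mem_filter, mem_univ, true_and] at *
          exact ha
        · intro a _ b _ h
          exact σ.injective h
        · intro b hb
          refine ⟨σ.symm b, ?_, by simp⟩
          simp only [mem_filter, mem_univ, true_and, Equiv.apply_symm_apply] at *
          exact hb
      rw [hcard]
    calc μ (A j) = μ ((fun ω i => Z (σ i) ω) ⁻¹' {v | rk (Fin.last n) v ≤ k}) := by rw [h1]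
      _ = Measure.map (fun ω i => Z (σ i) ω) μ {v | rk (Fin.last n) v ≤ k} :=
          (Measure.map_apply hσZ (hMs _)).symm
      _ = Measure.map (fun ω i => Z i ω) μ {v | rk (Fin.last n) v ≤ k} := by rw [hexch σ]
      _ = μ (A (Fin.last n)) := Measure.map_apply hZvec (hMs _)
  -- sum bound
  have hsum : ∑ j : Fin (n + 1), μ (A j) ≤ (k : ℝ≥0∞) := by
    have h1 : ∑ j : Fin (n + 1), μ (A j)
        = ∫⁻ ω, ∑ j : Fin (n + 1), (A j).indicator (1 : Ω → ℝ≥0∞) ω ∂μ := by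
      rw [lintegral_finset_sum]
      · simp_rw [lintegral_indicator_one (hAms _)]
      · exact fun j _ => (measurable_one.indicator (hAms j))
    rw [h1]
    have h2 : ∀ ω, ∑ j : Fin (n + 1), (A j).indicator (1 : Ω → ℝ≥0∞) ω ≤ (k : ℝ≥0∞) := by
      intro ω
      have : ∑ j : Fin (n + 1), (A j).indicator (1 : Ω → ℝ≥0∞) ω
          = ((univ.filter fun j => rk j (fun i => Z i ω) ≤ k).card : ℝ≥0∞) := by
        rw [Finset.card_filter]
        push_cast
        refine Finset.sum_congr rfl fun j _ => ?_
        simp only [Set.indicator_apply, hA, Set.mem_preimage, Set.mem_setOf_eq]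
        split <;> rename_i h <;> simp [Set.indicator_apply, h]
      rw [this]
      exact_mod_cast rk_count (fun i => Z i ω) k
    calc ∫⁻ ω, ∑ j : Fin (n + 1), (A j).indicator (1 : Ω → ℝ≥0∞) ω ∂μ
        ≤ ∫⁻ _, (k : ℝ≥0∞) ∂μ := lintegral_mono h2
      _ = k := by simp
  have hmain : ((n : ℝ≥0∞) + 1) * μ (A (Fin.last n)) ≤ (k : ℝ≥0∞) := by
    calc ((n : ℝ≥0∞) + 1) * μ (A (Fin.last n))
        = ∑ j : Fin (n + 1), μ (A j) := by
          simp [key, Finset.sum_const, mul_comm]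
      _ ≤ (k : ℝ≥0∞) := hsum
  rw [hev]
  have hk_le : (k : ℝ≥0∞) ≤ ENNReal.ofReal ε * ((n : ℝ≥0∞) + 1) := by
    have h1 : (k : ℝ) ≤ ε * (n + 1) := Nat.floor_le hc0
    calc (k : ℝ≥0∞) = ENNReal.ofReal (k : ℝ) := by simp
      _ ≤ ENNReal.ofReal (ε * (n + 1)) := ENNReal.ofReal_le_ofReal h1
      _ = ENNReal.ofReal ε * ENNReal.ofReal ((n : ℝ) + 1) := ENNReal.ofReal_mul hε.le
      _ = ENNReal.ofReal ε * ((n : ℝ≥0∞) + 1) := by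
          congr 1
          rw [show ((n : ℝ) + 1) = ((n + 1 : ℕ) : ℝ) by push_cast; ring,
            ENNReal.ofReal_natCast]
          push_cast
          ring
  have hne0 : ((n : ℝ≥0∞) + 1) ≠ 0 := by simp
  have hnetop : ((n : ℝ≥0∞) + 1) ≠ ⊤ := by simp
  have := hmain.trans hk_le
  rw [mul_comm (ENNReal.ofReal ε)] at this
  exact (ENNReal.mul_le_mul_iff_right hne0 hnetop).mp this
end

section
/- Let a_1, …, a_{n+1} be real numbers and let ε > 0. Among the (n+1)! permutations σ of {1, …, n+1}, the fraction for which the last-placed value a_{σ(n+1)} fails to lie in the upper (1−ε)-fraction of the multiset (i.e., for which |{i : a_i ≤ a_{σ(n+1)}}| ≤ ε(n+1)) is at most ε. -/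
/-!
Proof idea: the value `σ (last)` of a uniformly random permutation is uniformly distributed, so the
fraction of permutations placing a "strange" value last is the fraction `#T / (n + 1)` of strange
indices `T = {j | #{i | a i ≤ a j} ≤ ε (n + 1)}`. Every strange index lies below the largest one,
`j₀` say, so `#T ≤ #{i | a i ≤ a j₀} ≤ ε (n + 1)`.
-/

open Finset Equiv

section
variable {α : Type*} [Fintype α] [DecidableEq α]

theorem card_filter_perm_apply_eq_eq (x y z : α) :
    #{σ : Perm α | σ x = y} = #{σ : Perm α | σ x = z} :=
  card_nbij' (swap y z * ·) (swap y z * ·) (fun σ hσ => by simp_all) (fun σ hσ => by simp_all)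
    (fun σ _ => by simp [← mul_assoc]) (fun σ _ => by simp [← mul_assoc])

theorem card_filter_perm_apply_mem (x : α) (t : Finset α) :
    #{σ : Perm α | σ x ∈ t} = #t * #{σ : Perm α | σ x = x} := by
  rw [card_eq_sum_card_fiberwise (f := fun σ : Perm α => σ x) (t := t) (fun σ hσ => by simp_all),
    ← smul_eq_mul, ← sum_const]
  refine sum_congr rfl fun y hy => ?_
  rw [filter_filter, ← card_filter_perm_apply_eq_eq x y x]
  congr 1
  exact filter_congr fun σ _ => and_iff_right_of_imp fun h => h ▸ hy

theorem card_filter_perm_apply_mul_card (p : α → Prop) [DecidablePred p] (x : α) :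
    #{σ : Perm α | p (σ x)} * Fintype.card α = #{y | p y} * (Fintype.card α).factorial := by
  have hp := card_filter_perm_apply_mem x {y | p y}
  have huniv := card_filter_perm_apply_mem x univ
  simp only [mem_filter, mem_univ, true_and, filter_true, card_univ, Fintype.card_perm] at hp huniv
  rw [hp, huniv]
  ring

end

theorem card_filter_card_le_le {ι α : Type*} [Fintype ι] [LinearOrder α] (a : ι → α) {c : ℝ}
    (hc : 0 ≤ c) : (#{j | (#{i | a i ≤ a j} : ℝ) ≤ c} : ℝ) ≤ c := by
  set T : Finset ι := {j | (#{i | a i ≤ a j} : ℝ) ≤ c}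
  obtain hT | hT := T.eq_empty_or_nonempty
  · simpa [hT] using hc
  obtain ⟨j, hjT, hmax⟩ := T.exists_max_image a hT
  calc (#T : ℝ) ≤ #{i | a i ≤ a j} := by
        exact_mod_cast card_le_card fun i hi => mem_filter.mpr ⟨mem_univ i, hmax i hi⟩
    _ ≤ c := (mem_filter.mp hjT).2

/-- Permutation-counting core of conformal validity: for real numbers
`a 0, …, a n` and `ε > 0`, the fraction of permutations `σ` of `{0, …, n}` whose
last-placed value fails to lie in the upper `(1 - ε)`-fraction of the multiset
(i.e. `|{i : a i ≤ a (σ (last))}| ≤ ε (n + 1)`, ties counted with `≤`) is at most `ε`. -/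
theorem permutation_counting_conformal {n : ℕ} (a : Fin (n + 1) → ℝ) (ε : ℝ) (hε : 0 < ε) :
    ((univ.filter fun σ : Equiv.Perm (Fin (n + 1)) =>
        ((univ.filter fun i : Fin (n + 1) => a i ≤ a (σ (Fin.last n))).card : ℝ)
          ≤ ε * (n + 1)).card : ℝ) / (Nat.factorial (n + 1)) ≤ ε := by
  set S := univ.filter fun σ : Equiv.Perm (Fin (n + 1)) =>
    ((univ.filter fun i : Fin (n + 1) => a i ≤ a (σ (Fin.last n))).card : ℝ) ≤ ε * (n + 1)
  set T := univ.filter fun j : Fin (n + 1) =>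
    ((univ.filter fun i : Fin (n + 1) => a i ≤ a j).card : ℝ) ≤ ε * (n + 1)
  have hcount : #S * (n + 1) = #T * (n + 1).factorial := by
    have := card_filter_perm_apply_mul_card
      (fun j => ((univ.filter fun i => a i ≤ a j).card : ℝ) ≤ ε * (n + 1)) (Fin.last n)
    rwa [Fintype.card_fin] at this
  have hT : (#T : ℝ) ≤ ε * (n + 1) := card_filter_card_le_le a (by positivity)
  rw [div_le_iff₀ (by positivity), ← mul_le_mul_iff_of_pos_right (by positivity : (0 : ℝ) < n + 1)]
  calc (#S : ℝ) * (n + 1) = #T * (n + 1).factorial := mod_cast hcount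
    _ ≤ ε * (n + 1) * (n + 1).factorial := by gcongr
    _ = ε * (n + 1).factorial * (n + 1) := by ring
end
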